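/- arXiv:1409.3981 — 3 statements merged into one kernel-verified Lean document; each statement's English description precedes it below -/
import Mathlib

section
/- Constant-coefficient Gronwall corollary: Let y : [0,T] → ℝ be nonnegative and continuous, and suppose y(t) ≤ c + (g/Γ(q))·∫₀ᵗ (t−s)^{q−1} y(s) ds for all t ∈ [0,T], where c ≥ 0, g ≥ 0, q > 0 are constants. Then y(t) ≤ c·E_q(g·t^q) for all t ∈ [0,T]. -/
open Set Real

noncomputable def mittagLeffler (q z : ℝ) : ℝ :=
  ∑' k : ℕ, z ^ k / Real.Gamma (k * q + 1)

/-- Slope bound from log-convexity of Γ: `Γ(s) * (s-1)^q ≤ Γ(s+q)` for `s > 1`, `q > 0`. -/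
lemma gc_Gamma_ratio {s q : ℝ} (hs : 1 < s) (hq : 0 < q) :
    Real.Gamma s * (s - 1) ^ q ≤ Real.Gamma (s + q) := by
  have h0 : (0:ℝ) < s - 1 := by linarith
  have hΓ1 : 0 < Real.Gamma (s - 1) := Real.Gamma_pos_of_pos h0
  have hΓs : 0 < Real.Gamma s := Real.Gamma_pos_of_pos (by linarith)
  have hΓsq : 0 < Real.Gamma (s + q) := Real.Gamma_pos_of_pos (by linarith)
  have hslope := Real.convexOn_log_Gamma.slope_mono_adjacent
    (x := s - 1) (y := s) (z := s + q)
    (mem_Ioi.mpr h0) (mem_Ioi.mpr (by linarith)) (by linarith) (by linarith)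
  have hrec : Real.Gamma s = (s - 1) * Real.Gamma (s - 1) := by
    have := Real.Gamma_add_one (s := s - 1) h0.ne'
    simpa using this
  have hlog : Real.log (Real.Gamma s) - Real.log (Real.Gamma (s - 1)) = Real.log (s - 1) := by
    rw [hrec, Real.log_mul h0.ne' hΓ1.ne']; ring
  simp only [Function.comp] at hslope
  rw [show s - (s - 1) = 1 by ring, show s + q - s = q by ring, div_one, hlog] at hslope
  have h3 : Real.log (Real.Gamma s) + q * Real.log (s - 1)
      ≤ Real.log (Real.Gamma (s + q)) := by
    have := (le_div_iff₀ hq).mp hslope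
    linarith
  calc Real.Gamma s * (s - 1) ^ q
      = Real.exp (Real.log (Real.Gamma s) + q * Real.log (s - 1)) := by
        rw [Real.exp_add, Real.exp_log hΓs, Real.rpow_def_of_pos h0]
        ring_nf
    _ ≤ Real.exp (Real.log (Real.Gamma (s + q))) := Real.exp_le_exp.mpr h3
    _ = Real.Gamma (s + q) := Real.exp_log hΓsq

/-- Summability of the Mittag-Leffler series for nonnegative argument. -/
lemma gc_summable {q : ℝ} (hq : 0 < q) {x : ℝ} (hx : 0 ≤ x) :
    Summable (fun k : ℕ => x ^ k / Real.Gamma (k * q + 1)) := by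
  apply summable_of_ratio_norm_eventually_le (r := 1/2) (by norm_num)
  have htend : Filter.Tendsto (fun k : ℕ => ((k : ℝ) * q) ^ q) Filter.atTop Filter.atTop :=
    (tendsto_rpow_atTop hq).comp (tendsto_natCast_atTop_atTop.atTop_mul_const hq)
  filter_upwards [htend.eventually_ge_atTop (2 * x + 1), Filter.eventually_ge_atTop 1]
    with k hk1 hk2
  have hk2' : (1:ℝ) ≤ (k:ℝ) := by exact_mod_cast hk2
  have hkq : (0:ℝ) < k * q := by nlinarith
  have hΓk : 0 < Real.Gamma ((k:ℝ) * q + 1) := Real.Gamma_pos_of_pos (by linarith)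
  have hΓk1 : 0 < Real.Gamma (((k:ℝ) + 1) * q + 1) := Real.Gamma_pos_of_pos (by nlinarith)
  have hratio : Real.Gamma ((k:ℝ) * q + 1) * ((k:ℝ) * q) ^ q
      ≤ Real.Gamma (((k:ℝ) + 1) * q + 1) := by
    have := gc_Gamma_ratio (s := (k:ℝ) * q + 1) (q := q) (by linarith) hq
    have harg : (k:ℝ) * q + 1 + q = ((k:ℝ) + 1) * q + 1 := by ring
    simpa [harg] using this
  have hxk : (0:ℝ) ≤ x ^ k := pow_nonneg hx k
  rw [Real.norm_eq_abs, Real.norm_eq_abs, abs_div, abs_div,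
    abs_of_nonneg (pow_nonneg hx _), abs_of_nonneg (pow_nonneg hx _)]
  push_cast
  rw [abs_of_nonneg hΓk.le, abs_of_nonneg hΓk1.le, mul_div_assoc',
    div_le_div_iff₀ hΓk1 hΓk]
  calc x ^ (k + 1) * Real.Gamma ((k:ℝ) * q + 1)
      = x ^ k * (x * Real.Gamma ((k:ℝ) * q + 1)) := by ring
    _ ≤ x ^ k * (1/2 * (Real.Gamma ((k:ℝ) * q + 1) * (2 * x + 1))) := by
        apply mul_le_mul_of_nonneg_left _ hxk
        nlinarith
    _ ≤ x ^ k * (1/2 * Real.Gamma (((k:ℝ) + 1) * q + 1)) := by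
        apply mul_le_mul_of_nonneg_left _ hxk
        have : Real.Gamma ((k:ℝ) * q + 1) * (2 * x + 1)
            ≤ Real.Gamma (((k:ℝ) + 1) * q + 1) :=
          le_trans (mul_le_mul_of_nonneg_left hk1 hΓk.le) hratio
        linarith
    _ = 1/2 * x ^ k * Real.Gamma (((k:ℝ) + 1) * q + 1) := by ring


/-- Real Beta integral on `[0, t]`. -/
lemma gc_beta {a b t : ℝ} (ha : 0 < a) (hb : 0 < b) (ht : 0 < t) :
    ∫ s in (0:ℝ)..t, (t - s) ^ (a - 1) * s ^ (b - 1)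
      = Real.Gamma a * Real.Gamma b / Real.Gamma (a + b) * t ^ (a + b - 1) := by
  have key : (↑(∫ s in (0:ℝ)..t, (t - s) ^ (a - 1) * s ^ (b - 1)) : ℂ)
      = ∫ s in (0:ℝ)..t, (s:ℂ) ^ ((b:ℂ) - 1) * ((t:ℂ) - s) ^ ((a:ℂ) - 1) := by
    rw [← intervalIntegral.integral_ofReal]
    apply intervalIntegral.integral_congr
    intro s hs
    rw [uIcc_of_le ht.le] at hs
    have hs0 : (0:ℝ) ≤ s := hs.1
    have hts : (0:ℝ) ≤ t - s := by linarith [hs.2]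
    dsimp only
    rw [Complex.ofReal_mul, Complex.ofReal_cpow hts, Complex.ofReal_cpow hs0]
    push_cast
    ring
  have h2 := Complex.betaIntegral_scaled (b:ℂ) (a:ℂ) ht
  have hΓab : Complex.Gamma ((b:ℂ) + a) ≠ 0 := by
    rw [show ((b:ℂ) + a) = ((b + a : ℝ) : ℂ) by push_cast; ring, Complex.Gamma_ofReal]
    exact_mod_cast (Real.Gamma_pos_of_pos (by linarith)).ne'
  have h3 : Complex.betaIntegral (b:ℂ) (a:ℂ)
      = Complex.Gamma b * Complex.Gamma a / Complex.Gamma ((b:ℂ) + a) := by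
    rw [eq_div_iff hΓab]
    rw [Complex.Gamma_mul_Gamma_eq_betaIntegral (by simpa using hb) (by simpa using ha)]
    ring
  apply Complex.ofReal_injective
  rw [key, h2, h3]
  rw [Complex.Gamma_ofReal, Complex.Gamma_ofReal,
    show ((b:ℂ) + a) = ((b + a : ℝ) : ℂ) by push_cast; ring, Complex.Gamma_ofReal,
    show ((b + a : ℝ):ℂ) - 1 = (((a + b - 1 : ℝ)) : ℂ) by push_cast; ring,
    ← Complex.ofReal_cpow ht.le]
  push_cast
  ring

lemma gc_beta_step {q p t : ℝ} (hq : 0 < q) (hp : 0 ≤ p) (ht : 0 ≤ t) :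
    ∫ s in (0:ℝ)..t, (t - s) ^ (q - 1) * s ^ p
      = Real.Gamma q * Real.Gamma (p + 1) / Real.Gamma (q + p + 1) * t ^ (q + p) := by
  rcases eq_or_lt_of_le ht with h | h
  · rw [← h]
    simp [Real.zero_rpow (by positivity : q + p ≠ 0)]
  · have := gc_beta (a := q) (b := p + 1) hq (by linarith) h
    simp only [add_sub_cancel_right] at this
    rw [this, show q + (p + 1) - 1 = q + p by ring, show q + (p + 1) = q + p + 1 by ring]

/-- Integrability of `(t-s)^(q-1) * f s` on `[0,t]` for continuous `f`. -/
lemma gc_integrable {q t : ℝ} (hq : 0 < q) (ht : 0 ≤ t) {f : ℝ → ℝ}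
    (hf : ContinuousOn f (uIcc (0:ℝ) t)) :
    IntervalIntegrable (fun s => (t - s) ^ (q - 1) * f s) MeasureTheory.volume 0 t := by
  have h1 : IntervalIntegrable (fun x : ℝ => x ^ (q - 1)) MeasureTheory.volume 0 t :=
    intervalIntegral.intervalIntegrable_rpow' (by linarith)
  have h2 := (h1.comp_sub_left t).symm
  simp only [sub_zero, sub_self] at h2
  exact h2.mul_continuousOn hf

/-- Constant-coefficient Gronwall corollary. -/
theorem gronwall_const (T c g q : ℝ) (hc : 0 ≤ c) (hg : 0 ≤ g) (hq : 0 < q)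
    (y : ℝ → ℝ)
    (hy_nonneg : ∀ t ∈ Icc (0:ℝ) T, 0 ≤ y t)
    (hy_cont : ContinuousOn y (Icc (0:ℝ) T))
    (hineq : ∀ t ∈ Icc (0:ℝ) T,
      y t ≤ c + (g / Real.Gamma q) * ∫ s in (0:ℝ)..t, (t - s) ^ (q - 1) * y s) :
    ∀ t ∈ Icc (0:ℝ) T, y t ≤ c * mittagLeffler q (g * t ^ q) := by
  intro t htmem
  obtain ⟨ht0, htT⟩ := htmem
  have hT : (0:ℝ) ≤ T := le_trans ht0 htT
  have hΓq : 0 < Real.Gamma q := Real.Gamma_pos_of_pos hq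
  -- a uniform bound for y
  obtain ⟨u, humem, humax⟩ := isCompact_Icc.exists_isMaxOn (s := Icc (0:ℝ) T)
    ⟨0, by simp [hT]⟩ hy_cont
  set M : ℝ := y u with hM
  have hM0 : 0 ≤ M := hy_nonneg u humem
  have hMb : ∀ s ∈ Icc (0:ℝ) T, y s ≤ M := fun s hs => humax hs
  -- the key induction
  have key : ∀ n : ℕ, ∀ τ ∈ Icc (0:ℝ) T,
      y τ ≤ c * (∑ k ∈ Finset.range n, (g * τ ^ q) ^ k / Real.Gamma (k * q + 1))
            + M * ((g * τ ^ q) ^ n / Real.Gamma (n * q + 1)) := by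
    intro n
    induction n with
    | zero =>
      intro τ hτ
      simpa [Real.Gamma_one] using hMb τ hτ
    | succ n ih =>
      intro τ hτ
      obtain ⟨hτ0, hτT⟩ := hτ
      have huIcc : uIcc (0:ℝ) τ = Icc 0 τ := uIcc_of_le hτ0
      have hcont_pow : ∀ k : ℕ,
          ContinuousOn (fun s : ℝ => (g * s ^ q) ^ k / Real.Gamma (k * q + 1))
            (Icc (0:ℝ) τ) := by
        intro k
        apply ContinuousOn.div_const
        apply ContinuousOn.pow
        exact continuousOn_const.mul
          (ContinuousOn.rpow_const continuousOn_id (fun s _ => Or.inr hq.le))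
      have hint_k : ∀ k : ℕ, IntervalIntegrable
          (fun s => (τ - s) ^ (q - 1) * ((g * s ^ q) ^ k / Real.Gamma (k * q + 1)))
          MeasureTheory.volume 0 τ := by
        intro k
        exact gc_integrable hq hτ0 (huIcc ▸ hcont_pow k)
      have hcontF : ContinuousOn (fun s : ℝ =>
          c * (∑ k ∈ Finset.range n, (g * s ^ q) ^ k / Real.Gamma (k * q + 1))
            + M * ((g * s ^ q) ^ n / Real.Gamma (n * q + 1))) (Icc (0:ℝ) τ) := by
        apply ContinuousOn.add
        · exact continuousOn_const.mul
            (continuousOn_finset_sum _ (fun k _ => hcont_pow k))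
        · exact continuousOn_const.mul (hcont_pow n)
      have hintF : IntervalIntegrable (fun s =>
          (τ - s) ^ (q - 1) * (c * (∑ k ∈ Finset.range n,
            (g * s ^ q) ^ k / Real.Gamma (k * q + 1))
              + M * ((g * s ^ q) ^ n / Real.Gamma (n * q + 1))))
          MeasureTheory.volume 0 τ :=
        gc_integrable hq hτ0 (huIcc ▸ hcontF)
      have hinty : IntervalIntegrable (fun s => (τ - s) ^ (q - 1) * y s)
          MeasureTheory.volume 0 τ :=
        gc_integrable hq hτ0 (huIcc ▸ hy_cont.mono (Icc_subset_Icc le_rfl hτT))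
      -- monotonicity step
      have hmono : (∫ s in (0:ℝ)..τ, (τ - s) ^ (q - 1) * y s)
          ≤ ∫ s in (0:ℝ)..τ, (τ - s) ^ (q - 1) * (c * (∑ k ∈ Finset.range n,
              (g * s ^ q) ^ k / Real.Gamma (k * q + 1))
                + M * ((g * s ^ q) ^ n / Real.Gamma (n * q + 1))) := by
        apply intervalIntegral.integral_mono_on hτ0 hinty hintF
        intro s hs
        have hτs : (0:ℝ) ≤ τ - s := by linarith [hs.2]
        exact mul_le_mul_of_nonneg_left (ih s ⟨hs.1, le_trans hs.2 hτT⟩)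
          (Real.rpow_nonneg hτs _)
      -- splitting the integral
      have hsplit : (∫ s in (0:ℝ)..τ, (τ - s) ^ (q - 1) * (c * (∑ k ∈ Finset.range n,
              (g * s ^ q) ^ k / Real.Gamma (k * q + 1))
                + M * ((g * s ^ q) ^ n / Real.Gamma (n * q + 1))))
          = ∑ k ∈ Finset.range (n + 1), (if k = n then M else c) * ∫ s in (0:ℝ)..τ,
              (τ - s) ^ (q - 1) * ((g * s ^ q) ^ k / Real.Gamma (k * q + 1)) := by
        rw [intervalIntegral.integral_congr
          (g := fun s => ∑ k ∈ Finset.range (n + 1), (if k = n then M else c)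
            * ((τ - s) ^ (q - 1) * ((g * s ^ q) ^ k / Real.Gamma (k * q + 1)))) ?_]
        · rw [intervalIntegral.integral_finset_sum
            (fun k _ => (hint_k k).const_mul _)]
          exact Finset.sum_congr rfl
            (fun k _ => intervalIntegral.integral_const_mul _ _)
        · intro s _
          dsimp only
          rw [Finset.sum_range_succ, if_pos rfl]
          have hif : ∀ k ∈ Finset.range n, (if k = n then M else c)
              * ((τ - s) ^ (q - 1) * ((g * s ^ q) ^ k / Real.Gamma (k * q + 1)))
              = c * ((τ - s) ^ (q - 1) * ((g * s ^ q) ^ k / Real.Gamma (k * q + 1))) :=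
            fun k hk => by rw [if_neg (Finset.mem_range.mp hk).ne]
          rw [Finset.sum_congr rfl hif, mul_add, Finset.mul_sum]
          congr 1
          · rw [Finset.mul_sum]
            exact Finset.sum_congr rfl fun k _ => by ring
          · ring
      -- evaluation of the basic integrals
      have hIk : ∀ k : ℕ, (g / Real.Gamma q) * ∫ s in (0:ℝ)..τ,
            (τ - s) ^ (q - 1) * ((g * s ^ q) ^ k / Real.Gamma (k * q + 1))
          = (g * τ ^ q) ^ (k + 1) / Real.Gamma ((k + 1 : ℕ) * q + 1) := by
        intro k
        have hconst : (∫ s in (0:ℝ)..τ, (τ - s) ^ (q - 1)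
              * ((g * s ^ q) ^ k / Real.Gamma (k * q + 1)))
            = (g ^ k / Real.Gamma (k * q + 1))
              * ∫ s in (0:ℝ)..τ, (τ - s) ^ (q - 1) * s ^ (q * k) := by
          rw [← intervalIntegral.integral_const_mul]
          apply intervalIntegral.integral_congr
          intro s hs
          rw [huIcc] at hs
          dsimp only
          rw [mul_pow, ← Real.rpow_natCast (s ^ q) k, ← Real.rpow_mul hs.1]
          ring
        rw [hconst, gc_beta_step hq (by positivity) hτ0]
        have h1 : Real.Gamma (q * (k:ℝ) + 1) = Real.Gamma ((k:ℝ) * q + 1) := by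
          rw [mul_comm]
        have h2 : Real.Gamma (q + q * (k:ℝ) + 1) = Real.Gamma (((k:ℕ) + 1 : ℕ) * q + 1) := by
          congr 1
          push_cast
          ring
        have hτq : τ ^ (q + q * (k:ℝ)) = (τ ^ q) ^ (k + 1) := by
          rw [← Real.rpow_natCast (τ ^ q) (k + 1), ← Real.rpow_mul hτ0]
          congr 1
          push_cast
          ring
        rw [h1, h2, hτq]
        have hΓk : Real.Gamma ((k:ℝ) * q + 1) ≠ 0 :=
          (Real.Gamma_pos_of_pos (by positivity)).ne'
        have hΓk1 : Real.Gamma (((k:ℕ) + 1 : ℕ) * q + 1) ≠ 0 := by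
          refine (Real.Gamma_pos_of_pos ?_).ne'
          push_cast
          positivity
        rw [mul_pow]
        field_simp
        ring
      -- assemble
      calc y τ ≤ c + (g / Real.Gamma q)
            * ∫ s in (0:ℝ)..τ, (τ - s) ^ (q - 1) * y s := hineq τ ⟨hτ0, hτT⟩
        _ ≤ c + (g / Real.Gamma q) * ∫ s in (0:ℝ)..τ, (τ - s) ^ (q - 1)
              * (c * (∑ k ∈ Finset.range n, (g * s ^ q) ^ k / Real.Gamma (k * q + 1))
                + M * ((g * s ^ q) ^ n / Real.Gamma (n * q + 1))) := by
            have : (0:ℝ) ≤ g / Real.Gamma q := by positivity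
            nlinarith [hmono, mul_le_mul_of_nonneg_left hmono this]
        _ = c + ((∑ k ∈ Finset.range n,
              c * ((g * τ ^ q) ^ (k + 1) / Real.Gamma ((k + 1 : ℕ) * q + 1)))
            + M * ((g * τ ^ q) ^ (n + 1) / Real.Gamma ((n + 1 : ℕ) * q + 1))) := by
            rw [hsplit, Finset.mul_sum, Finset.sum_range_succ, if_pos rfl]
            congr 1
            congr 1
            · apply Finset.sum_congr rfl
              intro k hk
              rw [if_neg (Finset.mem_range.mp hk).ne, ← hIk k]
              ring
            · rw [← hIk n]
              ring
        _ = c * (∑ k ∈ Finset.range (n + 1), (g * τ ^ q) ^ k / Real.Gamma (k * q + 1))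
            + M * ((g * τ ^ q) ^ (n + 1) / Real.Gamma ((n + 1 : ℕ) * q + 1)) := by
            rw [Finset.sum_range_succ']
            simp only [Nat.cast_zero, zero_mul, zero_add, Real.Gamma_one, pow_zero, div_one]
            rw [mul_add, mul_one, Finset.mul_sum]
            ring
  -- pass to the limit
  have hx : (0:ℝ) ≤ g * t ^ q := mul_nonneg hg (Real.rpow_nonneg ht0 q)
  have hsum := gc_summable hq hx
  have htends : Filter.Tendsto (fun n : ℕ =>
      c * (∑ k ∈ Finset.range n, (g * t ^ q) ^ k / Real.Gamma (k * q + 1))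
        + M * ((g * t ^ q) ^ n / Real.Gamma (n * q + 1))) Filter.atTop
      (nhds (c * mittagLeffler q (g * t ^ q) + M * 0)) := by
    apply Filter.Tendsto.add
    · exact (hsum.hasSum.tendsto_sum_nat).const_mul c
    · exact Filter.Tendsto.const_mul M (by simpa using hsum.tendsto_atTop_zero)
  have := ge_of_tendsto' htends (fun n => key n t ⟨ht0, htT⟩)
  simpa using this
end

section
/- Finite time stability of the semilinear fractional multi-delay system: Consider D^q x(t) = A₀x(t) + Σ_{i=1}^p A_i x(t−τ_i) + B₀u(t) + f(t,x(t)) for t ≥ 0, with x(t) = ψ(t) on [−τ,0], τ = max τ_i, where each solution satisfies the integral equation x(t) = x(0) + (1/Γ(q))∫₀ᵗ(t−s)^{q−1}[A₀x(s) + Σ_i A_i x(s−τ_i) + B₀u(s) + f(s,x(s))]ds. Let σ bound the operator norms of A₀,…,A_p, let b₀ bound the operator norm of B₀, let f satisfy ‖f(t,x)‖ ≤ L‖x‖ + m, and suppose ‖ψ‖_∞ < δ and ‖u(t)‖ ≤ q_u on [0,T]. If [1 + (m + b₀q_u)T^q/(δ·Γ(q+1))]·E_q((L + σ(p+1))T^q)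 < ε/δ, then ‖x(t)‖ < ε for all t ∈ [0,T]. -/
/-!
Let `a = L + σ (p + 1)`, `c = m + b₀ q_u` and `ψ(t) = E_q(a t^q)`. Termwise Riemann–Liouville
integration of the Mittag-Leffler series, via the Beta integral, gives the Volterra identity
`ψ(t) = 1 + a / Γ(q) ∫₀ᵗ (t - s)^(q-1) ψ(s) ds`. Hence `D ψ`, with
`D = δ + c T^q / Γ(q + 1)`, is a strict supersolution of the integral inequality satisfied by
`‖x‖`: as long as `‖x‖ < D ψ` on `[0, t)` (and `‖x‖ < δ ≤ D ψ` on the initial interval), the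
integral equation forces `‖x t‖ < D ψ(t)`. A first-crossing argument then gives `‖x‖ < D ψ` on
all of `[0, T]`, and `D ψ(T) < ε` is the hypothesis.
-/

open Set Real MeasureTheory

theorem rpow_mul_exp_neg_two_mul_le_Gamma {r s : ℝ} (hr : 0 < r) (hs : 1 ≤ s) :
    r ^ s * exp (-(2 * r)) ≤ Gamma s := by
  have hint := GammaIntegral_convergent (zero_lt_one.trans_le hs)
  rw [Gamma_eq_integral (zero_lt_one.trans_le hs)]
  calc r ^ s * exp (-(2 * r)) = ∫ _ in Icc r (2 * r), exp (-(2 * r)) * r ^ (s - 1) := by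
        rw [setIntegral_const, volume_real_Icc_of_le (by linarith), smul_eq_mul,
          rpow_sub_one hr.ne']
        field_simp
        ring
    _ ≤ ∫ t in Icc r (2 * r), exp (-t) * t ^ (s - 1) := by
        refine setIntegral_mono_on (integrableOn_const (by simp))
          (hint.mono_set fun t ht => hr.trans_le ht.1) measurableSet_Icc fun t ht => ?_
        exact mul_le_mul (exp_le_exp.2 (by linarith [ht.2]))
          (rpow_le_rpow hr.le ht.1 (by linarith)) (by positivity) (exp_pos _).le
    _ ≤ ∫ t in Ioi 0, exp (-t) * t ^ (s - 1) :=
        setIntegral_mono_set hint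
          ((ae_restrict_iff' measurableSet_Ioi).2 (ae_of_all _ fun t ht =>
            mul_nonneg (exp_pos _).le (rpow_nonneg (le_of_lt ht) _)))
          (Filter.Eventually.of_forall fun t ht => hr.trans_le ht.1)

theorem summable_pow_div_Gamma {q b : ℝ} (hq : 0 < q) (hb : 1 ≤ b) (z : ℝ) :
    Summable fun k : ℕ => z ^ k / Gamma (k * q + b) := by
  set r := (|z| + 1) ^ q⁻¹
  have hz : 0 < |z| + 1 := by positivity
  have hr : 1 ≤ r := one_le_rpow (by linarith [abs_nonneg z]) (inv_nonneg.2 hq.le)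
  have hrq : r ^ q = |z| + 1 := by rw [← rpow_mul hz.le, inv_mul_cancel₀ hq.ne', rpow_one]
  refine Summable.of_norm_bounded ((summable_geometric_of_lt_one (by positivity)
    ((div_lt_one hz).2 (lt_add_one _))).mul_left (exp (2 * r))) fun k => ?_
  have hΓ := rpow_mul_exp_neg_two_mul_le_Gamma (zero_lt_one.trans_le hr)
    (le_add_of_nonneg_of_le (by positivity : (0 : ℝ) ≤ k * q) hb)
  have hpow : (|z| + 1) ^ k ≤ r ^ (k * q + b) := by
    rw [← hrq, ← rpow_natCast, ← rpow_mul (zero_le_one.trans hr)]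
    exact rpow_le_rpow_of_exponent_le hr (by nlinarith)
  have hΓpos : 0 < Gamma (k * q + b) := Gamma_pos_of_pos (by positivity)
  rw [norm_div, norm_pow, norm_eq_abs, norm_of_nonneg hΓpos.le]
  calc |z| ^ k / Gamma (k * q + b) ≤ |z| ^ k / ((|z| + 1) ^ k * exp (-(2 * r))) := by
        gcongr
        exact (mul_le_mul_of_nonneg_right hpow (exp_pos _).le).trans hΓ
    _ = exp (2 * r) * (|z| / (|z| + 1)) ^ k := by
        rw [exp_neg, div_pow]
        field_simp

theorem one_le_mittagLeffler {q z : ℝ} (hq : 0 < q) (hz : 0 ≤ z) : 1 ≤ mittagLeffler q z := by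
  have h := (summable_pow_div_Gamma hq le_rfl z).le_tsum 0 fun k _ =>
    div_nonneg (pow_nonneg hz k) (Gamma_pos_of_pos (by positivity)).le
  simpa [mittagLeffler, Gamma_one] using h

theorem mittagLeffler_monotoneOn {q : ℝ} (hq : 0 < q) : MonotoneOn (mittagLeffler q) (Ici 0) :=
  fun z hz z' _ hzz' => (summable_pow_div_Gamma hq le_rfl z).tsum_le_tsum
    (fun k => div_le_div_of_nonneg_right (pow_le_pow_left₀ hz hzz' k)
      (Gamma_pos_of_pos (by positivity)).le)
    (summable_pow_div_Gamma hq le_rfl z')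

theorem continuous_mittagLeffler {q : ℝ} (hq : 0 < q) : Continuous (mittagLeffler q) := by
  refine continuous_iff_continuousAt.2 fun z => ?_
  set R := |z| + 1
  have hcont : ContinuousOn (mittagLeffler q) (Icc (-R) R) :=
    continuousOn_tsum (fun k => ((continuous_pow k).div_const _).continuousOn)
      (summable_pow_div_Gamma hq le_rfl R) fun k w hw => by
        rw [norm_div, norm_pow, norm_eq_abs,
          norm_of_nonneg (Gamma_pos_of_pos (by positivity)).le]
        gcongr
        exact abs_le.2 hw
  exact hcont.continuousAt
    (Icc_mem_nhds (by linarith [neg_abs_le z]) (by linarith [le_abs_self z]))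

theorem continuous_mittagLeffler_mul_rpow {q : ℝ} (hq : 0 < q) (a : ℝ) :
    Continuous fun s => mittagLeffler q (a * s ^ q) :=
  (continuous_mittagLeffler hq).comp (continuous_const.mul (continuous_rpow_const hq.le))

theorem mittagLeffler_mul_rpow_le {q a s t : ℝ} (hq : 0 < q) (ha : 0 ≤ a) (hs : 0 ≤ s)
    (hst : s ≤ t) : mittagLeffler q (a * s ^ q) ≤ mittagLeffler q (a * t ^ q) :=
  mittagLeffler_monotoneOn hq (mem_Ici.2 (by positivity))
    (mem_Ici.2 (mul_nonneg ha (rpow_nonneg (hs.trans hst) _))) (by gcongr)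

theorem integral_rpow_mul_one_sub_rpow {u v : ℝ} (hu : 0 < u) (hv : 0 < v) :
    ∫ s in (0 : ℝ)..1, s ^ (u - 1) * (1 - s) ^ (v - 1) = Gamma u * Gamma v / Gamma (u + v) := by
  have hβ : Complex.betaIntegral u v
      = ((∫ s in (0 : ℝ)..1, s ^ (u - 1) * (1 - s) ^ (v - 1) : ℝ) : ℂ) := by
    rw [Complex.betaIntegral, ← intervalIntegral.integral_ofReal]
    refine intervalIntegral.integral_congr fun s hs => ?_
    rw [uIcc_of_le zero_le_one] at hs
    rw [Complex.ofReal_mul, Complex.ofReal_cpow hs.1, Complex.ofReal_cpow (sub_nonneg.2 hs.2)]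
    push_cast
    rfl
  have h := Complex.Gamma_mul_Gamma_eq_betaIntegral (s := u) (t := v) (by simpa using hu)
    (by simpa using hv)
  rw [hβ, ← Complex.ofReal_add, Complex.Gamma_ofReal, Complex.Gamma_ofReal,
    Complex.Gamma_ofReal] at h
  rw [eq_div_iff (Gamma_pos_of_pos (add_pos hu hv)).ne', mul_comm]
  exact_mod_cast h.symm

theorem integral_sub_rpow_mul_rpow {q b t : ℝ} (hq : 0 < q) (hb : 0 ≤ b) (ht : 0 ≤ t) :
    ∫ s in (0 : ℝ)..t, (t - s) ^ (q - 1) * s ^ b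
      = Gamma q * Gamma (b + 1) / Gamma (q + b + 1) * t ^ (q + b) := by
  have hscale := intervalIntegral.smul_integral_comp_mul_left
    (fun s => (t - s) ^ (q - 1) * s ^ b) t (a := 0) (b := 1)
  simp only [mul_zero, mul_one, smul_eq_mul] at hscale
  rw [← hscale, intervalIntegral.integral_congr (g := fun s => t ^ (q - 1) * t ^ b *
    (s ^ (b + 1 - 1) * (1 - s) ^ (q - 1))) fun s hs => ?_, intervalIntegral.integral_const_mul,
    integral_rpow_mul_one_sub_rpow (by linarith) hq, rpow_add' ht (by linarith),
    add_comm (b + 1) q, ← add_assoc]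
  · have htq : t ^ q = t * t ^ (q - 1) := by
      rw [← rpow_one_add' ht (by simpa using hq.ne'), add_sub_cancel]
    rw [htq]
    ring
  · rw [uIcc_of_le zero_le_one] at hs
    rw [add_sub_cancel_right, ← mul_one_sub, mul_rpow ht (sub_nonneg.2 hs.2), mul_rpow ht hs.1]
    ring

theorem integral_sub_rpow {q t : ℝ} (hq : 0 < q) (ht : 0 ≤ t) :
    ∫ s in (0 : ℝ)..t, (t - s) ^ (q - 1) = t ^ q / q := by
  have h := integral_sub_rpow_mul_rpow hq le_rfl ht
  simp only [rpow_zero, mul_one, add_zero, zero_add, Gamma_one, Gamma_add_one hq.ne'] at h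
  rw [h]
  field_simp [(Gamma_pos_of_pos hq).ne']

theorem intervalIntegrable_sub_rpow_mul {q t : ℝ} (hq : 0 < q) {g : ℝ → ℝ}
    (hg : ContinuousOn g (uIcc 0 t)) :
    IntervalIntegrable (fun s => (t - s) ^ (q - 1) * g s) volume 0 t := by
  refine IntervalIntegrable.mul_continuousOn ?_ hg
  simpa using (intervalIntegral.intervalIntegrable_rpow' (r := q - 1) (by linarith)
    (a := 0) (b := t)).comp_sub_left t |>.symm

theorem integral_sub_rpow_mul_pow_div_Gamma {q a t : ℝ} (hq : 0 < q) (ht : 0 ≤ t) (k : ℕ) :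
    ∫ s in (0 : ℝ)..t, (t - s) ^ (q - 1) * ((a * s ^ q) ^ k / Gamma (k * q + 1))
      = Gamma q * t ^ q * (a * t ^ q) ^ k / Gamma (k * q + (q + 1)) := by
  have hpow : ∀ s, 0 ≤ s → (a * s ^ q) ^ k = a ^ k * s ^ (k * q) := fun s hs => by
    rw [mul_pow, ← rpow_natCast (s ^ q), ← rpow_mul hs, mul_comm q]
  rw [intervalIntegral.integral_congr (g := fun s => a ^ k / Gamma (k * q + 1) *
      ((t - s) ^ (q - 1) * s ^ (k * q))) fun s hs => ?_, intervalIntegral.integral_const_mul,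
    integral_sub_rpow_mul_rpow hq (by positivity) ht, rpow_add' ht (by positivity),
    hpow t ht, add_comm q, add_assoc]
  · field_simp [(Gamma_pos_of_pos (by positivity : (0 : ℝ) < k * q + 1)).ne']
  · rw [uIcc_of_le ht] at hs
    dsimp only
    rw [hpow s hs.1]
    ring

theorem mul_integral_sub_rpow_mul_mittagLeffler {q a t : ℝ} (hq : 0 < q) (ha : 0 ≤ a)
    (ht : 0 ≤ t) :
    a * ∫ s in (0 : ℝ)..t, (t - s) ^ (q - 1) * mittagLeffler q (a * s ^ q)
      = Gamma q * (mittagLeffler q (a * t ^ q) - 1) := by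
  set F : ℕ → ℝ → ℝ := fun k s => (t - s) ^ (q - 1) * ((a * s ^ q) ^ k / Gamma (k * q + 1))
  have hF_int : ∀ k, Integrable (F k) (volume.restrict (Ioc 0 t)) := fun k => by
    have hcont : Continuous fun s : ℝ => (a * s ^ q) ^ k / Gamma (k * q + 1) := by
      fun_prop (disch := exact hq.le)
    have h := (intervalIntegrable_sub_rpow_mul (t := t) hq hcont.continuousOn).def'
    rwa [uIoc_of_le ht] at h
  have hF_norm : ∀ k, ∫ s in Ioc 0 t, ‖F k s‖
      = Gamma q * t ^ q * (a * t ^ q) ^ k / Gamma (k * q + (q + 1)) := fun k => by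
    rw [setIntegral_congr_fun measurableSet_Ioc fun s hs => norm_of_nonneg (mul_nonneg
        (rpow_nonneg (sub_nonneg.2 hs.2) _) (div_nonneg (pow_nonneg (mul_nonneg ha
          (rpow_nonneg hs.1.le _)) _) (Gamma_pos_of_pos (by positivity)).le)),
      ← intervalIntegral.integral_of_le ht, integral_sub_rpow_mul_pow_div_Gamma hq ht]
  have hsum := hasSum_integral_of_summable_integral_norm hF_int <| by
    simp_rw [hF_norm, mul_div_assoc]
    exact (summable_pow_div_Gamma hq (by linarith) (a * t ^ q)).mul_left _
  have hF_tsum : (fun s => ∑' k, F k s)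
      = fun s => (t - s) ^ (q - 1) * mittagLeffler q (a * s ^ q) :=
    funext fun s => tsum_mul_left
  rw [hF_tsum, ← intervalIntegral.integral_of_le ht] at hsum
  have hML := (summable_pow_div_Gamma hq le_rfl (a * t ^ q)).hasSum
  rw [← hasSum_nat_add_iff' 1] at hML
  -- `a` times the integral of the `k`-th term is `Γ(q)` times the `(k + 1)`-st term
  refine (hsum.mul_left a).unique ?_
  convert hML.mul_left (Gamma q) using 1
  · funext k
    rw [← intervalIntegral.integral_of_le ht, integral_sub_rpow_mul_pow_div_Gamma hq ht]
    push_cast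
    field_simp
    ring_nf
  · simp [mittagLeffler, Gamma_one]

theorem inv_Gamma_mul_integral_sub_rpow_mul_mittagLeffler_add {q a t : ℝ} (hq : 0 < q)
    (ha : 0 ≤ a) (ht : 0 ≤ t) (K c : ℝ) :
    (Gamma q)⁻¹ * ∫ s in (0 : ℝ)..t, (t - s) ^ (q - 1) * (a * (K * mittagLeffler q (a * s ^ q)) + c)
      = K * (mittagLeffler q (a * t ^ q) - 1) + c * t ^ q / Gamma (q + 1) := by
  have h₁ := intervalIntegrable_sub_rpow_mul (t := t) hq
    (continuous_mittagLeffler_mul_rpow hq a).continuousOn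
  have h₂ := intervalIntegrable_sub_rpow_mul (t := t) hq (g := fun _ => 1) continuousOn_const
  simp only [mul_one] at h₂
  rw [intervalIntegral.integral_congr (g := fun s => (K * a) *
      ((t - s) ^ (q - 1) * mittagLeffler q (a * s ^ q)) + c * (t - s) ^ (q - 1))
      fun s _ => by ring,
    intervalIntegral.integral_add (h₁.const_mul _) (h₂.const_mul _),
    intervalIntegral.integral_const_mul, intervalIntegral.integral_const_mul, mul_assoc K,
    mul_integral_sub_rpow_mul_mittagLeffler hq ha ht, integral_sub_rpow hq ht,
    Gamma_add_one hq.ne']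
  field_simp [(Gamma_pos_of_pos hq).ne']

theorem lt_of_continuous_induction {f g : ℝ → ℝ} {a b : ℝ} (hf : ContinuousOn f (Icc a b))
    (hg : ContinuousOn g (Icc a b))
    (hstep : ∀ t ∈ Icc a b, (∀ s ∈ Ico a t, f s < g s) → f t < g t) :
    ∀ t ∈ Icc a b, f t < g t := by
  by_contra! ⟨t₀, ht₀, hle₀⟩
  have hclosed : IsClosed (Icc a b ∩ (fun t => f t - g t) ⁻¹' Ici 0) :=
    (hf.sub hg).preimage_isClosed_of_isClosed isClosed_Icc isClosed_Ici
  obtain ⟨t, ⟨ht, hle⟩, hleast⟩ := (isCompact_Icc.of_isClosed_subset hclosed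
    inter_subset_left).exists_isLeast ⟨t₀, ht₀, sub_nonneg.2 hle₀⟩
  refine (sub_nonneg.1 hle).not_gt (hstep t ht fun s hs => ?_)
  by_contra! hs'
  exact (hleast ⟨⟨hs.1, hs.2.le.trans ht.2⟩, sub_nonneg.2 hs'⟩).not_gt hs.2

theorem nonneg_of_norm_le_mul_norm_add {E F : Type*} [NormedAddCommGroup E] [NormedSpace ℝ E]
    [Nontrivial E] [NormedAddCommGroup F] {g : E → F} {L m : ℝ}
    (h : ∀ y, ‖g y‖ ≤ L * ‖y‖ + m) : 0 ≤ L := by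
  by_contra! hL
  obtain ⟨y, hy⟩ := exists_norm_eq E (c := (|m| + 1) / -L)
    (div_nonneg (by positivity) (neg_nonneg.2 hL.le))
  have hLy : L * ‖y‖ = -(|m| + 1) := by
    rw [hy, mul_div_assoc', div_neg, mul_div_cancel_left₀ _ hL.ne]
  linarith [(norm_nonneg _).trans (h y), le_abs_self m]

section DelaySystem

variable {E F : Type*} [NormedAddCommGroup E] [NormedSpace ℝ E] [NormedAddCommGroup F]
  [NormedSpace ℝ F] {p : ℕ} {A₀ : E →L[ℝ] E} {A : Fin p → E →L[ℝ] E} {B₀ : F →L[ℝ] E}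
  {σ b₀ L m qu : ℝ}

theorem norm_delay_field_le (hσ : ‖A₀‖ ≤ σ) (hσi : ∀ i, ‖A i‖ ≤ σ) (hb : ‖B₀‖ ≤ b₀)
    {y₀ w : E} {y : Fin p → E} {v : F} {R : ℝ} (hy₀ : ‖y₀‖ ≤ R) (hy : ∀ i, ‖y i‖ ≤ R)
    (hv : ‖v‖ ≤ qu) (hw : ‖w‖ ≤ L * R + m) :
    ‖A₀ y₀ + ∑ i, A i (y i) + B₀ v + w‖ ≤ (L + σ * (p + 1)) * R + (m + b₀ * qu) := by
  have hσ0 : 0 ≤ σ := (norm_nonneg _).trans hσ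
  have h₀ : ‖A₀ y₀‖ ≤ σ * R :=
    (A₀.le_opNorm y₀).trans (mul_le_mul hσ hy₀ (norm_nonneg _) hσ0)
  have hsum : ‖∑ i, A i (y i)‖ ≤ p * (σ * R) := by
    refine (norm_sum_le _ _).trans ?_
    simpa using Finset.sum_le_sum (s := Finset.univ) fun i _ =>
      ((A i).le_opNorm (y i)).trans (mul_le_mul (hσi i) (hy i) (norm_nonneg _) hσ0)
  have hB : ‖B₀ v‖ ≤ b₀ * qu :=
    (B₀.le_opNorm v).trans (mul_le_mul hb hv (norm_nonneg _) ((norm_nonneg _).trans hb))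
  calc _ ≤ ‖A₀ y₀‖ + ‖∑ i, A i (y i)‖ + ‖B₀ v‖ + ‖w‖ := norm_add₄_le
    _ ≤ _ := by linarith

variable {q t τm : ℝ} {τ : Fin p → ℝ} {f : ℝ → E → E} {u : ℝ → F} {x : ℝ → E}

theorem norm_le_add_integral_of_forall_norm_le (hq : 0 < q) (hL : 0 ≤ L) (hσ : ‖A₀‖ ≤ σ)
    (hσi : ∀ i, ‖A i‖ ≤ σ) (hb : ‖B₀‖ ≤ b₀) (hτm : 0 ≤ τm)
    (hτ : ∀ i, τ i ∈ Icc 0 τm) (hf : ∀ s y, ‖f s y‖ ≤ L * ‖y‖ + m)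
    (hu : ∀ s ∈ Icc 0 t, ‖u s‖ ≤ qu) (ht : 0 ≤ t)
    (hsol : x t = x 0 + (Gamma q)⁻¹ • ∫ s in (0 : ℝ)..t, (t - s) ^ (q - 1) •
      (A₀ (x s) + (∑ i, A i (x (s - τ i))) + B₀ (u s) + f s (x s)))
    {R : ℝ → ℝ} (hR : ContinuousOn R (Icc 0 t))
    (hxR : ∀ s ∈ Ico 0 t, ∀ r ∈ Icc (-τm) s, ‖x r‖ ≤ R s) :
    ‖x t‖ ≤ ‖x 0‖ + (Gamma q)⁻¹ *
      ∫ s in (0 : ℝ)..t, (t - s) ^ (q - 1) * ((L + σ * (p + 1)) * R s + (m + b₀ * qu)) := by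
  have hbound : ∀ᵐ s, s ∈ Ioc 0 t → ‖(t - s) ^ (q - 1) •
      (A₀ (x s) + (∑ i, A i (x (s - τ i))) + B₀ (u s) + f s (x s))‖
        ≤ (t - s) ^ (q - 1) * ((L + σ * (p + 1)) * R s + (m + b₀ * qu)) := by
    -- the history bound is only available on `[0, t)`, and `{t}` is null
    filter_upwards [compl_mem_ae_iff.2 (measure_singleton t)] with s hst hs
    have hs' : s ∈ Ico 0 t := ⟨hs.1.le, lt_of_le_of_ne hs.2 hst⟩
    have hxs := hxR s hs' s ⟨by linarith [hs.1], le_rfl⟩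
    have hkernel : 0 ≤ (t - s) ^ (q - 1) := rpow_nonneg (sub_nonneg.2 hs.2) _
    rw [norm_smul, norm_of_nonneg hkernel]
    exact mul_le_mul_of_nonneg_left (norm_delay_field_le hσ hσi hb hxs (fun i => hxR s hs' _
      ⟨by linarith [hs.1, (hτ i).2], by linarith [(hτ i).1]⟩) (hu s ⟨hs.1.le, hs.2⟩)
      ((hf s (x s)).trans (by gcongr))) hkernel
  have hΓ : 0 < Gamma q := Gamma_pos_of_pos hq
  rw [hsol]
  refine (norm_add_le _ _).trans (add_le_add le_rfl ?_)
  rw [norm_smul, norm_inv, norm_of_nonneg hΓ.le]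
  refine mul_le_mul_of_nonneg_left
    (intervalIntegral.norm_integral_le_of_norm_le ht hbound ?_) (inv_nonneg.2 hΓ.le)
  exact intervalIntegrable_sub_rpow_mul hq
    (((continuousOn_const.mul (hR.mono (by rw [uIcc_of_le ht])))).add continuousOn_const)

theorem norm_lt_mul_mittagLeffler_of_forall_lt {δ K : ℝ} (hq : 0 < q) (hL : 0 ≤ L)
    (hσ : ‖A₀‖ ≤ σ) (hσi : ∀ i, ‖A i‖ ≤ σ) (hb : ‖B₀‖ ≤ b₀) (hτm : 0 ≤ τm)
    (hτ : ∀ i, τ i ∈ Icc 0 τm) (hf : ∀ s y, ‖f s y‖ ≤ L * ‖y‖ + m)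
    (hu : ∀ s ∈ Icc 0 t, ‖u s‖ ≤ qu) (hψ : ∀ s ∈ Icc (-τm) 0, ‖x s‖ < δ) (hδK : δ ≤ K)
    (hK : δ + (m + b₀ * qu) * t ^ q / Gamma (q + 1) ≤ K) (ht : 0 ≤ t)
    (hsol : x t = x 0 + (Gamma q)⁻¹ • ∫ s in (0 : ℝ)..t, (t - s) ^ (q - 1) •
      (A₀ (x s) + (∑ i, A i (x (s - τ i))) + B₀ (u s) + f s (x s)))
    (hlt : ∀ s ∈ Ico 0 t, ‖x s‖ < K * mittagLeffler q ((L + σ * (p + 1)) * s ^ q)) :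
    ‖x t‖ < K * mittagLeffler q ((L + σ * (p + 1)) * t ^ q) := by
  set a := L + σ * (p + 1)
  have ha : 0 ≤ a := add_nonneg hL (mul_nonneg ((norm_nonneg _).trans hσ) (by positivity))
  have hx0 : ‖x 0‖ < δ := hψ 0 ⟨neg_nonpos.2 hτm, le_rfl⟩
  have hK0 : 0 ≤ K := (norm_nonneg _).trans (hx0.le.trans hδK)
  have hhist : ∀ s ∈ Ico 0 t, ∀ r ∈ Icc (-τm) s, ‖x r‖ ≤ K * mittagLeffler q (a * s ^ q) := by
    intro s hs r hr
    rcases le_or_gt 0 r with hr0 | hr0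
    · exact (hlt r ⟨hr0, hr.2.trans_lt hs.2⟩).le.trans
        (mul_le_mul_of_nonneg_left (mittagLeffler_mul_rpow_le hq ha hr0 hr.2) hK0)
    · exact (hψ r ⟨hr.1, hr0.le⟩).le.trans
        (hδK.trans (le_mul_of_one_le_right hK0
          (one_le_mittagLeffler hq (mul_nonneg ha (rpow_nonneg hs.1 _)))))
  calc ‖x t‖ ≤ ‖x 0‖ + (Gamma q)⁻¹ * ∫ s in (0 : ℝ)..t,
        (t - s) ^ (q - 1) * (a * (K * mittagLeffler q (a * s ^ q)) + (m + b₀ * qu)) :=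
        norm_le_add_integral_of_forall_norm_le hq hL hσ hσi hb hτm hτ hf hu ht hsol
          (continuous_const.mul (continuous_mittagLeffler_mul_rpow hq a)).continuousOn hhist
    _ = ‖x 0‖ + K * (mittagLeffler q (a * t ^ q) - 1) + (m + b₀ * qu) * t ^ q / Gamma (q + 1) := by
        rw [inv_Gamma_mul_integral_sub_rpow_mul_mittagLeffler_add hq ha ht, add_assoc]
    _ < K * mittagLeffler q (a * t ^ q) := by linarith

end DelaySystem

theorem finite_time_stability_general
    (n nu p : ℕ) (q T τm δ ε qu σ b₀ L m : ℝ)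
    (hq : 0 < q) (hτ : 0 ≤ τm)
    (hδ : 0 < δ) (hε : 0 < ε) (hqu : 0 < qu)
    (A₀ : (Fin n → ℝ) →L[ℝ] (Fin n → ℝ))
    (A : Fin p → ((Fin n → ℝ) →L[ℝ] (Fin n → ℝ)))
    (B₀ : (Fin nu → ℝ) →L[ℝ] (Fin n → ℝ))
    (τ : Fin p → ℝ) (hτi : ∀ i, 0 < τ i ∧ τ i ≤ τm)
    (f : ℝ → (Fin n → ℝ) → (Fin n → ℝ))
    (hf : ∀ t x, ‖f t x‖ ≤ L * ‖x‖ + m)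
    (hσ : ‖A₀‖ ≤ σ) (hσi : ∀ i, ‖A i‖ ≤ σ) (hb : ‖B₀‖ ≤ b₀)
    (u : ℝ → Fin nu → ℝ) (hu : ∀ t ∈ Icc (0:ℝ) T, ‖u t‖ ≤ qu)
    (x : ℝ → Fin n → ℝ)
    (hx_cont : ContinuousOn x (Icc (-τm) T))
    (hψ : ∀ t ∈ Icc (-τm) (0:ℝ), ‖x t‖ < δ)
    (hsol : ∀ t ∈ Icc (0:ℝ) T,
      x t = x 0 + (Real.Gamma q)⁻¹ •
        ∫ s in (0:ℝ)..t, (t - s) ^ (q - 1) •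
          (A₀ (x s) + (∑ i : Fin p, A i (x (s - τ i))) + B₀ (u s) + f s (x s)))
    (hcrit : (1 + (m + b₀ * qu) * T ^ q / (δ * Real.Gamma (q + 1)))
        * mittagLeffler q ((L + σ * (p + 1)) * T ^ q) < ε / δ) :
    ∀ t ∈ Icc (0:ℝ) T, ‖x t‖ < ε := by
  intro t ht
  rcases isEmpty_or_nonempty (Fin n) with hn | hn
  · rwa [Subsingleton.elim (x t) 0, norm_zero]
  have hL : 0 ≤ L := nonneg_of_norm_le_mul_norm_add (hf 0)
  have hc : 0 ≤ m + b₀ * qu := add_nonneg (by simpa using (norm_nonneg _).trans (hf 0 0))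
    (mul_nonneg ((norm_nonneg _).trans hb) hqu.le)
  have hΓ : 0 < Gamma (q + 1) := Gamma_pos_of_pos (by linarith)
  set ψ := fun s => mittagLeffler q ((L + σ * (p + 1)) * s ^ q)
  set D := δ + (m + b₀ * qu) * T ^ q / Gamma (q + 1) with hD
  have hD_le : ∀ s ∈ Icc 0 T, δ + (m + b₀ * qu) * s ^ q / Gamma (q + 1) ≤ D := fun s hs =>
    add_le_add_right (div_le_div_of_nonneg_right (mul_le_mul_of_nonneg_left
      (rpow_le_rpow hs.1 hs.2 hq.le) hc) hΓ.le) δ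
  have hδD : δ ≤ D :=
    le_add_of_nonneg_right (div_nonneg (mul_nonneg hc (rpow_nonneg (ht.1.trans ht.2) _)) hΓ.le)
  have hbound : ∀ s ∈ Icc 0 T, ‖x s‖ < D * ψ s :=
    lt_of_continuous_induction (hx_cont.mono (Icc_subset_Icc (by linarith) le_rfl)).norm
      (continuous_const.mul (continuous_mittagLeffler_mul_rpow hq _)).continuousOn
      fun s hs hlt => norm_lt_mul_mittagLeffler_of_forall_lt hq hL hσ hσi hb hτ
        (fun i => ⟨(hτi i).1.le, (hτi i).2⟩) hf (fun r hr => hu r ⟨hr.1, hr.2.trans hs.2⟩) hψ hδD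
        (hD_le s hs) hs.1 (hsol s hs) hlt
  calc ‖x t‖ < D * ψ t := hbound t ht
    _ ≤ D * ψ T := mul_le_mul_of_nonneg_left (mittagLeffler_mul_rpow_le hq
        (add_nonneg hL (mul_nonneg ((norm_nonneg _).trans hσ) (by positivity))) ht.1 ht.2)
        (hδ.le.trans hδD)
    _ = δ * ((1 + (m + b₀ * qu) * T ^ q / (δ * Gamma (q + 1))) * ψ T) := by
        rw [hD]
        field_simp
    _ < δ * (ε / δ) := mul_lt_mul_of_pos_left hcrit hδ
    _ = ε := mul_div_cancel₀ _ hδ.ne'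

/-- Finite time stability of the semilinear fractional multi-delay system. -/
theorem finite_time_stability
    (n nu p : ℕ) (q T τm δ ε qu σ b₀ L m : ℝ)
    (hq : 0 < q) (hq1 : q ≤ 1) (hT : 0 < T) (hτ : 0 ≤ τm)
    (hδ : 0 < δ) (hε : 0 < ε) (hqu : 0 < qu)
    (A₀ : (Fin n → ℝ) →L[ℝ] (Fin n → ℝ))
    (A : Fin p → ((Fin n → ℝ) →L[ℝ] (Fin n → ℝ)))
    (B₀ : (Fin nu → ℝ) →L[ℝ] (Fin n → ℝ))
    (τ : Fin p → ℝ) (hτi : ∀ i, 0 < τ i ∧ τ i ≤ τm)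
    (f : ℝ → (Fin n → ℝ) → (Fin n → ℝ))
    (hf : ∀ t x, ‖f t x‖ ≤ L * ‖x‖ + m)
    (hσ : ‖A₀‖ ≤ σ) (hσi : ∀ i, ‖A i‖ ≤ σ) (hb : ‖B₀‖ ≤ b₀)
    (u : ℝ → Fin nu → ℝ) (hu : ∀ t ∈ Icc (0:ℝ) T, ‖u t‖ ≤ qu)
    (x : ℝ → Fin n → ℝ)
    (hx_cont : ContinuousOn x (Icc (-τm) T))
    (hψ : ∀ t ∈ Icc (-τm) (0:ℝ), ‖x t‖ < δ)
    (hsol : ∀ t ∈ Icc (0:ℝ) T,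
      x t = x 0 + (Real.Gamma q)⁻¹ •
        ∫ s in (0:ℝ)..t, (t - s) ^ (q - 1) •
          (A₀ (x s) + (∑ i : Fin p, A i (x (s - τ i))) + B₀ (u s) + f s (x s)))
    (hcrit : (1 + (m + b₀ * qu) * T ^ q / (δ * Real.Gamma (q + 1)))
        * mittagLeffler q ((L + σ * (p + 1)) * T ^ q) < ε / δ) :
    ∀ t ∈ Icc (0:ℝ) T, ‖x t‖ < ε :=
  finite_time_stability_general n nu p q T τm δ ε qu σ b₀ L m hq hτ hδ hε hqu A₀ A B₀ τ hτi f hf hσ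
    hσi hb u hu x hx_cont hψ hsol hcrit
end

section
/- If a : [0,T] → ℝ is nonnegative and nondecreasing, q > 0, and g ≥ 0 is a constant, then a(t) + ∫₀ᵗ Σ_{n=1}^∞ (gΓ(q))ⁿ/Γ(nq)·(t−s)^{nq−1} a(s) ds ≤ a(t)·E_q(gΓ(q)t^q) for all t ∈ [0,T]. -/
open Set Real

/-!
Since `a` is nondecreasing, `a s ≤ a t` under the integral, and the `n`-th kernel integrates to
`(g Γ(q) t^q)^n / Γ(nq + 1)` because `∫₀ᵗ (t - s)^(p-1) / Γ(p) ds = t^p / Γ(p + 1)`. Summing over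
`n ≥ 1` gives `a t * (E_q(g Γ(q) t^q) - 1)`. Sum and integral may be exchanged because all terms
are nonnegative and the bounding series converges: `R^x ≤ C Γ(x + 1)` for `x ≥ 0`, so the
Mittag-Leffler series is dominated by a geometric one.
-/

open MeasureTheory
open scoped Nat

theorem factorial_mul_Gamma_le_Gamma_add_nat {x : ℝ} (hx : 1 ≤ x) (n : ℕ) :
    n ! * Gamma x ≤ Gamma (x + n) := by
  induction n with
  | zero => simp
  | succ n ih =>
    have hxn : 0 < x + n := by positivity
    rw [Nat.cast_succ, ← add_assoc, Gamma_add_one hxn.ne', Nat.factorial_succ, Nat.cast_mul,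
      Nat.cast_succ, mul_assoc]
    exact mul_le_mul (by linarith) ih (by positivity) hxn.le

theorem exists_rpow_le_mul_Gamma_add_one {R : ℝ} (hR : 1 ≤ R) :
    ∃ C, ∀ x, 0 ≤ x → R ^ x ≤ C * Gamma (x + 1) := by
  obtain ⟨x₀, hx₀, hmin⟩ := exists_isMinOn_Gamma_Ioi
  have hγ : 0 < Gamma x₀ := Gamma_pos_of_pos (one_pos.trans hx₀.1)
  refine ⟨R * exp R / Gamma x₀, fun x hx => ?_⟩
  set m := ⌊x⌋₊
  have hGamma : m ! * Gamma x₀ ≤ Gamma (x + 1) := by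
    have hfrac : 1 ≤ x - m + 1 := by linarith [Nat.floor_le hx]
    calc m ! * Gamma x₀ ≤ m ! * Gamma (x - m + 1) :=
          mul_le_mul_of_nonneg_left (hmin (by simp; linarith)) (by positivity)
      _ ≤ Gamma (x - m + 1 + m) := factorial_mul_Gamma_le_Gamma_add_nat hfrac m
      _ = Gamma (x + 1) := by ring_nf
  have hpow : R ^ x ≤ R * R ^ m := by
    rw [← pow_succ', ← rpow_natCast]
    exact rpow_le_rpow_of_exponent_le hR (by push_cast; linarith [Nat.lt_floor_add_one x])
  have hexp : R ^ m ≤ m ! * exp R := by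
    have := pow_div_factorial_le_exp R (by linarith) m
    rwa [div_le_iff₀ (by positivity), mul_comm] at this
  calc R ^ x ≤ R * (m ! * exp R) := hpow.trans (by gcongr)
    _ = R * exp R / Gamma x₀ * (m ! * Gamma x₀) := by field_simp
    _ ≤ R * exp R / Gamma x₀ * Gamma (x + 1) := by gcongr

theorem summable_mittagLeffler {q : ℝ} (hq : 0 < q) (z : ℝ) :
    Summable fun k : ℕ => z ^ k / Gamma (k * q + 1) := by
  -- `R ^ q = |z| + 1`, so the terms are dominated by `C (|z| / (|z| + 1)) ^ k`.
  set R := (|z| + 1) ^ q⁻¹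
  have hRq : R ^ q = |z| + 1 := by
    rw [← rpow_mul (by positivity), inv_mul_cancel₀ hq.ne', rpow_one]
  obtain ⟨C, hC⟩ := exists_rpow_le_mul_Gamma_add_one
    (one_le_rpow (le_add_of_nonneg_left (abs_nonneg z)) (inv_nonneg.mpr hq.le))
  refine Summable.of_norm_bounded
    ((summable_geometric_of_lt_one (by positivity) ((div_lt_one (by positivity)).mpr
      (lt_add_one |z|))).mul_left C) fun k => ?_
  have hΓ : 0 < Gamma (k * q + 1) := Gamma_pos_of_pos (by positivity)
  have hRk : (|z| + 1) ^ k ≤ C * Gamma (k * q + 1) := by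
    rw [← hRq, ← rpow_natCast, ← rpow_mul (by positivity), mul_comm q]
    exact hC _ (by positivity)
  rw [norm_div, norm_pow, Real.norm_eq_abs, Real.norm_of_nonneg hΓ.le, div_pow,
    div_le_iff₀ hΓ, ← mul_div_assoc, div_mul_eq_mul_div, le_div_iff₀ (by positivity)]
  linarith [mul_le_mul_of_nonneg_left hRk (pow_nonneg (abs_nonneg z) k)]

theorem mittagLeffler_eq_one_add {q : ℝ} (hq : 0 < q) (z : ℝ) :
    mittagLeffler q z = 1 + ∑' n : ℕ, z ^ (n + 1) / Gamma ((n + 1) * q + 1) := by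
  rw [mittagLeffler, (summable_mittagLeffler hq z).tsum_eq_zero_add]
  simp

theorem integral_sub_rpow_sub_one {p : ℝ} (hp : 0 < p) (t : ℝ) :
    ∫ s in (0 : ℝ)..t, (t - s) ^ (p - 1) = t ^ p / p := by
  rw [intervalIntegral.integral_comp_sub_left (fun u => u ^ (p - 1)), sub_self, sub_zero,
    integral_rpow (Or.inl (by linarith)), sub_add_cancel, zero_rpow hp.ne', sub_zero]

theorem intervalIntegrable_sub_rpow_sub_one {p : ℝ} (hp : 0 < p) (t : ℝ) :
    IntervalIntegrable (fun s => (t - s) ^ (p - 1)) volume 0 t := by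
  simpa using (intervalIntegral.intervalIntegrable_rpow' (r := p - 1) (by linarith)
    (a := 0) (b := t)).comp_sub_left t |>.symm

theorem integral_sub_rpow_sub_one_div_Gamma {p : ℝ} (hp : 0 < p) (t : ℝ) :
    ∫ s in (0 : ℝ)..t, (t - s) ^ (p - 1) / Gamma p = t ^ p / Gamma (p + 1) := by
  rw [intervalIntegral.integral_div, integral_sub_rpow_sub_one hp, Gamma_add_one hp.ne',
    div_div]

theorem integral_tsum_le_tsum_integral_of_le {α : Type*} [MeasurableSpace α] {μ : Measure α}
    {f g : ℕ → α → ℝ} (hf₀ : ∀ n, 0 ≤ᵐ[μ] f n) (hf : ∀ n, AEStronglyMeasurable (f n) μ)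
    (hfg : ∀ n, f n ≤ᵐ[μ] g n) (hg : ∀ n, Integrable (g n) μ)
    (hsum : Summable fun n => ∫ x, g n x ∂μ) :
    ∫ x, ∑' n, f n x ∂μ ≤ ∑' n, ∫ x, g n x ∂μ := by
  have hfi : ∀ n, Integrable (f n) μ := fun n =>
    (hg n).mono' (hf n) (by
      filter_upwards [hf₀ n, hfg n] with x h₀ h₁
      rwa [Real.norm_of_nonneg h₀])
  have hle : ∀ n, ∫ x, f n x ∂μ ≤ ∫ x, g n x ∂μ := fun n => integral_mono_ae (hfi n) (hg n) (hfg n)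
  have hsumf : Summable fun n => ∫ x, f n x ∂μ :=
    hsum.of_nonneg_of_le (fun n => integral_nonneg_of_ae (hf₀ n)) hle
  have hnorm : ∀ n, ∫ x, ‖f n x‖ ∂μ = ∫ x, f n x ∂μ := fun n =>
    integral_congr_ae (by filter_upwards [hf₀ n] with x hx using Real.norm_of_nonneg hx)
  rw [← integral_tsum_of_summable_integral_norm hfi (by simpa only [hnorm] using hsumf)]
  exact hsumf.tsum_le_tsum hle hsum

theorem integral_tsum_kernel_mul_le_of_monotoneOn {q w t : ℝ} {a : ℝ → ℝ} (hq : 0 < q) (hw : 0 ≤ w)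
    (ht : 0 ≤ t) (ha_nonneg : ∀ s ∈ Icc 0 t, 0 ≤ a s) (ha_mono : MonotoneOn a (Icc 0 t)) :
    (∫ s in (0 : ℝ)..t, ∑' n : ℕ, w ^ (n + 1) / Gamma ((n + 1) * q)
        * (t - s) ^ ((n + 1 : ℕ) * q - 1) * a s)
      ≤ a t * ∑' n : ℕ, (w * t ^ q) ^ (n + 1) / Gamma ((n + 1) * q + 1) := by
  have hIoc : Ioc 0 t ⊆ Icc 0 t := Ioc_subset_Icc_self
  have hmem : ∀ᵐ s ∂volume.restrict (Ioc 0 t), s ∈ Ioc 0 t := ae_restrict_mem measurableSet_Ioc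
  have hp : ∀ n : ℕ, 0 < ((n + 1 : ℕ) : ℝ) * q := fun n => by positivity
  have hkernel : ∀ n : ℕ, ∀ s ∈ Ioc 0 t,
      0 ≤ w ^ (n + 1) / Gamma ((n + 1) * q) * (t - s) ^ ((n + 1 : ℕ) * q - 1) := fun n s hs =>
    mul_nonneg (div_nonneg (pow_nonneg hw _) (Gamma_pos_of_pos (by positivity)).le)
      (rpow_nonneg (sub_nonneg.mpr hs.2) _)
  have hintegral : ∀ n : ℕ, ∫ s in Ioc 0 t,
      w ^ (n + 1) / Gamma ((n + 1) * q) * (t - s) ^ ((n + 1 : ℕ) * q - 1) * a t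
        = a t * ((w * t ^ q) ^ (n + 1) / Gamma ((n + 1) * q + 1)) := fun n => by
    have h := integral_sub_rpow_sub_one_div_Gamma (hp n) t
    rw [← intervalIntegral.integral_of_le ht]
    have htq : (t ^ q) ^ (n + 1) = t ^ (((n : ℝ) + 1) * q) := by
      rw [← rpow_natCast, ← rpow_mul ht]
      push_cast
      ring_nf
    push_cast at h ⊢
    rw [mul_pow, htq, mul_div_assoc, ← h, ← intervalIntegral.integral_const_mul,
      ← intervalIntegral.integral_const_mul]
    congr 1 with s
    ring
  rw [intervalIntegral.integral_of_le ht, ← tsum_mul_left, ← funext hintegral]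
  refine integral_tsum_le_tsum_integral_of_le (fun n => ?_) (fun n => ?_) (fun n => ?_)
    (fun n => ?_) ?_
  · filter_upwards [hmem] with s hs
    exact mul_nonneg (hkernel n s hs) (ha_nonneg s (hIoc hs))
  · have ha : AEMeasurable a (volume.restrict (Ioc 0 t)) :=
      (aemeasurable_restrict_of_monotoneOn measurableSet_Icc ha_mono).mono_set hIoc
    exact (Measurable.aestronglyMeasurable (by fun_prop)).mul ha.aestronglyMeasurable
  · filter_upwards [hmem] with s hs
    exact mul_le_mul_of_nonneg_left (ha_mono (hIoc hs) ⟨ht, le_rfl⟩ hs.2) (hkernel n s hs)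
  · exact (((intervalIntegrable_sub_rpow_sub_one (hp n) t).1.const_mul _).mul_const _)
  · simp_rw [hintegral]
    refine (((summable_nat_add_iff 1).mpr (summable_mittagLeffler hq (w * t ^ q))).mul_left
      (a t)).congr fun n => ?_
    push_cast
    rfl

/-- Bounding the Gronwall series by the Mittag-Leffler function when `a` is nondecreasing. -/
theorem series_le_mittagLeffler
    (T q g : ℝ) (hq : 0 < q) (hg : 0 ≤ g)
    (a : ℝ → ℝ)
    (ha_nonneg : ∀ t ∈ Icc (0:ℝ) T, 0 ≤ a t)
    (ha_mono : MonotoneOn a (Icc (0:ℝ) T)) :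
    ∀ t ∈ Icc (0:ℝ) T,
      a t + (∫ s in (0:ℝ)..t,
          ∑' n : ℕ, (g * Real.Gamma q) ^ (n + 1) / Real.Gamma ((n + 1) * q)
            * (t - s) ^ ((n + 1 : ℕ) * q - 1) * a s)
        ≤ a t * mittagLeffler q (g * Real.Gamma q * t ^ q) := by
  rintro t ⟨ht, htT⟩
  have hsub : Icc 0 t ⊆ Icc 0 T := Icc_subset_Icc_right htT
  calc _ ≤ a t + a t * ∑' n : ℕ, (g * Gamma q * t ^ q) ^ (n + 1) / Gamma ((n + 1) * q + 1) := by
        gcongr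
        exact integral_tsum_kernel_mul_le_of_monotoneOn hq
          (mul_nonneg hg (Gamma_pos_of_pos hq).le) ht (fun s hs => ha_nonneg s (hsub hs))
          (ha_mono.mono hsub)
    _ = a t * mittagLeffler q (g * Gamma q * t ^ q) := by
        rw [mittagLeffler_eq_one_add hq]
        ring
end
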